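/- Consider a knockout tournament with n = 2^ℓ players (ℓ ≥ 2) of equal strength and the deterministic draw in which in round 1 player 2i−1 plays player 2i, and in each subsequent round the winners of consecutive pairs of matches of the previous round play each other, all matches being independent fair coin flips; let S_i be the number of matches won by player i. Fix h ∈ {1,…,ℓ}, a nonempty proper subset I of {1,…,n} with 1 ∈ I, and a vector s over I∖{1} such that P(S_1 ≥ h, S_i ≥ s_i for all i ∈ I∖{1}) > 0. Let J = ({1,…,n}∖{1,…,2^h}) ∩ ({1,…,n}∖I). Then the conditional distribution of S_J given {S_1 = h−1, S_i ≥ s_i for all i ∈ I∖{1}} equals the conditional distribution of S_J given {S_1 ≥ h, S_i ≥ s_i for all i ∈ I∖{1}}. -/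

import Mathlib

open scoped Classical
open Finset

noncomputable section

/-- Probability of the event `A` on a finite sample space with weights `w`. -/
def Pr {Ω : Type*} [Fintype Ω] (w : Ω → ℝ) (A : Ω → Prop) : ℝ :=
  ∑ ω : Ω, if A ω then w ω else 0

/-- Expectation of `f` on a finite sample space with weights `w`. -/
def Expec {Ω : Type*} [Fintype Ω] (w : Ω → ℝ) (f : Ω → ℝ) : ℝ :=
  ∑ ω : Ω, w ω * f ω

/-- Conditional expectation of `f` given the event `A` under weights `w`. -/
def CExp {Ω : Type*} [Fintype Ω] (w : Ω → ℝ) (A : Ω → Prop) (f : Ω → ℝ) : ℝ :=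
  (∑ ω : Ω, if A ω then w ω * f ω else 0) / Pr w A

/-- `[X_I | A] ≤_st [X_I | B]` : the conditional distribution of the subvector `X_I`
given the event `A` is dominated, in the usual stochastic order, by the conditional
distribution of `X_I` given `B`; i.e. conditional expectations of every bounded
coordinatewise increasing function compare. -/
def CondSubvecStochLE {Ω : Type*} [Fintype Ω] {n : ℕ} (w : Ω → ℝ)
    (X : Ω → Fin n → ℝ) (I : Finset (Fin n)) (A B : Ω → Prop) : Prop :=
  ∀ φ : ({i : Fin n // i ∈ I} → ℝ) → ℝ, Monotone φ → (∃ C, ∀ v, |φ v| ≤ C) →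
    CExp w A (fun ω => φ fun i => X ω i.1) ≤ CExp w B (fun ω => φ fun i => X ω i.1)

/-- Negative regression dependence: `[X_I | X_J = x_J] ≥_st [X_I | X_J = x_J*]`
whenever `x_J ≤ x_J*` componentwise and both conditioning events have
positive probability. -/
def IsNRD {Ω : Type*} [Fintype Ω] {n : ℕ} (w : Ω → ℝ) (X : Ω → Fin n → ℝ) : Prop :=
  ∀ I J : Finset (Fin n), Disjoint I J → ∀ x y : Fin n → ℝ, (∀ j ∈ J, x j ≤ y j) →
    0 < Pr w (fun ω => ∀ j ∈ J, X ω j = x j) →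
    0 < Pr w (fun ω => ∀ j ∈ J, X ω j = y j) →
    CondSubvecStochLE w X I (fun ω => ∀ j ∈ J, X ω j = y j)
      (fun ω => ∀ j ∈ J, X ω j = x j)

/-- Negative left-tail dependence: `[X_I | X_J ≤ x_J] ≥_st [X_I | X_J ≤ x_J*]`
whenever `x_J ≤ x_J*` componentwise and both conditioning events have
positive probability. -/
def IsNLTD {Ω : Type*} [Fintype Ω] {n : ℕ} (w : Ω → ℝ) (X : Ω → Fin n → ℝ) : Prop :=
  ∀ I J : Finset (Fin n), Disjoint I J → ∀ x y : Fin n → ℝ, (∀ j ∈ J, x j ≤ y j) →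
    0 < Pr w (fun ω => ∀ j ∈ J, X ω j ≤ x j) →
    0 < Pr w (fun ω => ∀ j ∈ J, X ω j ≤ y j) →
    CondSubvecStochLE w X I (fun ω => ∀ j ∈ J, X ω j ≤ y j)
      (fun ω => ∀ j ∈ J, X ω j ≤ x j)

/-- Negative right-tail dependence: `[X_I | X_J > x_J] ≥_st [X_I | X_J > x_J*]`
whenever `x_J ≤ x_J*` componentwise and both conditioning events have
positive probability. -/
def IsNRTD {Ω : Type*} [Fintype Ω] {n : ℕ} (w : Ω → ℝ) (X : Ω → Fin n → ℝ) : Prop :=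
  ∀ I J : Finset (Fin n), Disjoint I J → ∀ x y : Fin n → ℝ, (∀ j ∈ J, x j ≤ y j) →
    0 < Pr w (fun ω => ∀ j ∈ J, x j < X ω j) →
    0 < Pr w (fun ω => ∀ j ∈ J, y j < X ω j) →
    CondSubvecStochLE w X I (fun ω => ∀ j ∈ J, y j < X ω j)
      (fun ω => ∀ j ∈ J, x j < X ω j)

/-- Negative association on a finite weighted sample space:
`Cov(ψ₁(X_{A₁}), ψ₂(X_{A₂})) ≤ 0` for disjoint `A₁, A₂` and bounded
coordinatewise increasing `ψ₁, ψ₂`. -/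
def IsNAfin {Ω : Type*} [Fintype Ω] {n : ℕ} (w : Ω → ℝ) (X : Ω → Fin n → ℝ) : Prop :=
  ∀ A₁ A₂ : Finset (Fin n), Disjoint A₁ A₂ →
    ∀ ψ₁ : ({i : Fin n // i ∈ A₁} → ℝ) → ℝ, ∀ ψ₂ : ({i : Fin n // i ∈ A₂} → ℝ) → ℝ,
      Monotone ψ₁ → Monotone ψ₂ → (∃ C, ∀ v, |ψ₁ v| ≤ C) → (∃ C, ∀ v, |ψ₂ v| ≤ C) →
      Expec w (fun ω => (ψ₁ fun i => X ω i.1) * (ψ₂ fun i => X ω i.1))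
        ≤ Expec w (fun ω => ψ₁ fun i => X ω i.1) * Expec w (fun ω => ψ₂ fun i => X ω i.1)

/-- The uniform distribution on the permutations of `Fin n`. -/
def unifPerm (n : ℕ) : Equiv.Perm (Fin n) → ℝ := fun _ => (Nat.factorial n : ℝ)⁻¹

/-- The random vector with the permutation distribution on `a`:
`X = (a_{σ(1)}, …, a_{σ(n)})` for a uniformly random permutation `σ`. -/
def permVec {n : ℕ} (a : Fin n → ℝ) (σ : Equiv.Perm (Fin n)) : Fin n → ℝ :=
  fun i => a (σ i)

/-- The sample space of match outcomes of a knockout tournament with `2^ℓ` players: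
`ω r b` is the outcome of the match indexed `b` in round `r+1` (all matches of
round `r+1` have indices `b < 2^(ℓ-1-r)`; the remaining coordinates are unused
padding coins). -/
abbrev TournOmega (ℓ : ℕ) := Fin ℓ → Fin (2 ^ (ℓ - 1)) → Bool

/-- The uniform distribution on match outcomes: all matches are independent fair
coin flips (players of equal strength). -/
def tournUnif (ℓ : ℕ) : TournOmega ℓ → ℝ := fun _ => (Fintype.card (TournOmega ℓ) : ℝ)⁻¹

/-- `tournWinner ℓ ω r b` is the (0-indexed) player winning the sub-tournament among
players `b·2^r, …, (b+1)·2^r - 1` after round `r`.  In round `r+1` the winner of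
block `2b` of level `r` plays the winner of block `2b+1` of level `r`  (so in round 1
player `2b` plays player `2b+1`, and in each subsequent round the winners of
consecutive pairs of matches of the previous round play each other); the outcome bit
`ω r b` decides the match. -/
def tournWinner (ℓ : ℕ) (ω : TournOmega ℓ) : ℕ → ℕ → ℕ
  | 0, b => b
  | r + 1, b =>
    if h : r < ℓ ∧ b < 2 ^ (ℓ - 1) then
      if ω ⟨r, h.1⟩ ⟨b, h.2⟩ then tournWinner ℓ ω r (2 * b)
      else tournWinner ℓ ω r (2 * b + 1)
    else 0

/-- `tournScore ℓ ω i` is the number of matches won by (0-indexed) player `i`: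
the number of rounds `r ∈ {1,…,ℓ}` after which player `i` is still the winner of
its block. -/
def tournScore (ℓ : ℕ) (ω : TournOmega ℓ) : Fin (2 ^ ℓ) → ℝ := fun i =>
  (((Finset.Icc 1 ℓ).filter fun r => tournWinner ℓ ω r (i.1 / 2 ^ r) = i.1).card : ℝ)

/-!
Each player's score is a function of the coins of the matches on its own path through the
bracket. Hence the scores of the players `j ≥ 2^h` are functions of the coins outside the
first `h` rounds of the block `{0, …, 2^h - 1}`, while the survival of player `0` through
those rounds is a function of the coins inside. Since `S₀ ≥ h` is compatible with the
constraints, every constrained block player `i ≠ 0` has `⌈s_i⌉ < h`, so its constraint too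
only reads its first `h - 1` matches, inside the block. Both conditioning events therefore
split as (block event) ∩ (outside event), and under the uniform product measure the
conditional law of an outside quantity given such an intersection forgets the block event.
-/

section Splice

variable {Ω : Type*} [Fintype Ω] {σ : Ω → Ω → Ω}

/-- The involution `(a, b) ↦ (σ a b, σ b a)` of `Ω × Ω` turns `∑ F a * G b` into
`∑ F a * G a`. -/
theorem card_mul_sum_mul_eq_of_splice (hσ : ∀ a b, σ (σ a b) (σ b a) = a) {F G : Ω → ℝ}
    (hF : ∀ a b, F (σ a b) = F a) (hG : ∀ a b, G (σ a b) = G b) :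
    (Fintype.card Ω : ℝ) * ∑ ω, F ω * G ω = (∑ ω, F ω) * ∑ ω, G ω := by
  let e : Ω × Ω → Ω × Ω := fun p => (σ p.1 p.2, σ p.2 p.1)
  have he : Function.Involutive e := fun p => Prod.ext (hσ p.1 p.2) (hσ p.2 p.1)
  calc (Fintype.card Ω : ℝ) * ∑ ω, F ω * G ω = ∑ p : Ω × Ω, F p.1 * G p.1 := by
        simp [Fintype.sum_prod_type, Finset.mul_sum]
    _ = ∑ p : Ω × Ω, F p.1 * G p.2 :=
        Fintype.sum_bijective e he.bijective _ _ fun p => by simp only [e, hF, hG]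
    _ = (∑ ω, F ω) * ∑ ω, G ω := by rw [Fintype.sum_mul_sum, Fintype.sum_prod_type]

theorem cExp_const_and_eq_of_splice (hσ : ∀ a b, σ (σ a b) (σ b a) = a) (c : ℝ)
    {P Q : Ω → Prop} {f : Ω → ℝ} (hP : ∀ a b, P (σ a b) ↔ P a)
    (hQ : ∀ a b, Q (σ a b) ↔ Q b) (hf : ∀ a b, f (σ a b) = f b) (hPne : ∃ ω, P ω) :
    CExp (fun _ => c) (fun ω => P ω ∧ Q ω) f = CExp (fun _ => c) Q f := by
  set F : Ω → ℝ := fun ω => if P ω then 1 else 0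
  obtain ⟨ω₀, hω₀⟩ := hPne
  have hcard : (0 : ℝ) < Fintype.card Ω := by
    have : Nonempty Ω := ⟨ω₀⟩
    exact_mod_cast Fintype.card_pos
  have hFpos : 0 < (∑ ω, F ω) / Fintype.card Ω :=
    div_pos (Finset.sum_pos' (fun ω _ => by positivity)
      ⟨ω₀, Finset.mem_univ _, by simp [F, hω₀]⟩) hcard
  have hsum : ∀ x : Ω → ℝ, (∀ a b, x (σ a b) = x b) →
      ∑ ω, (if P ω ∧ Q ω then x ω else 0)
        = (∑ ω, F ω) / Fintype.card Ω * ∑ ω, if Q ω then x ω else 0 := by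
    intro x hx
    rw [div_mul_eq_mul_div, ← card_mul_sum_mul_eq_of_splice hσ (fun a b => by simp only [F, hP])
      (G := fun ω => if Q ω then x ω else 0) (fun a b => by simp only [hQ, hx]),
      mul_div_cancel_left₀ _ hcard.ne']
    simp only [F, ite_and, boole_mul]
  simp only [CExp, Pr]
  rw [hsum _ fun a b => by rw [hf], hsum _ fun _ _ => rfl, mul_div_mul_left _ _ hFpos.ne']

end Splice

theorem pow_sub_eq_mul_pow_sub_succ {M : Type*} [Monoid M] (a : M) {m n : ℕ} (h : m < n) :
    a ^ (n - m) = a * a ^ (n - (m + 1)) := by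
  rw [← pow_succ']
  congr 1
  omega

theorem exists_of_pr_pos {Ω : Type*} [Fintype Ω] {w : Ω → ℝ} {A : Ω → Prop}
    (hpos : 0 < Pr w A) : ∃ ω, A ω := by
  obtain ⟨ω, -, hω⟩ := Finset.exists_ne_zero_of_sum_ne_zero hpos.ne'
  exact ⟨ω, of_not_not fun hA => hω (if_neg hA)⟩

theorem cExp_congr_event {Ω : Type*} [Fintype Ω] {w : Ω → ℝ} {A B : Ω → Prop} {f : Ω → ℝ}
    (h : ∀ ω, A ω ↔ B ω) : CExp w A f = CExp w B f := by
  rw [show A = B from funext fun ω => propext (h ω)]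

theorem le_card_filter_Icc_iff {p : ℕ → Prop} [DecidablePred p] (hp : Antitone p) (h0 : p 0)
    {m n : ℕ} (hmn : m ≤ n) : m ≤ #{r ∈ Icc 1 n | p r} ↔ p m := by
  constructor
  · intro hm
    by_contra hpm
    have hsub : {r ∈ Icc 1 n | p r} ⊆ Icc 1 (m - 1) := fun r hr => by
      simp only [mem_filter, mem_Icc] at hr ⊢
      exact ⟨hr.1.1, by_contra fun hrm => hpm (hp (by omega) hr.2)⟩
    have := card_le_card hsub
    rcases m with _ | m
    · exact hpm h0
    · simp only [Nat.card_Icc] at this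
      omega
  · intro hpm
    calc m = #(Icc 1 m) := by simp
      _ ≤ _ := card_le_card fun r hr => by
        simp only [mem_filter, mem_Icc] at hr ⊢
        exact ⟨⟨hr.1, hr.2.trans hmn⟩, hp hr.2 hpm⟩

namespace Knockout

variable {ℓ : ℕ}

/-- Player `j` plays its `(t+1)`-th match in match `j / 2^(t+1)` of round `t+1`, on the side
favoured by the coin value `true` iff `j / 2^t` is even. -/
def WinsFirstMatches (ℓ : ℕ) (ω : TournOmega ℓ) (j r : ℕ) : Prop :=
  ∀ t < r, ∀ (ht : t < ℓ) (hb : j / 2 ^ (t + 1) < 2 ^ (ℓ - 1)),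
    ω ⟨t, ht⟩ ⟨j / 2 ^ (t + 1), hb⟩ = decide (j / 2 ^ t % 2 = 0)

theorem winsFirstMatches_congr {ω ω' : TournOmega ℓ} {j r : ℕ}
    (h : ∀ t < r, ∀ (ht : t < ℓ) (hb : j / 2 ^ (t + 1) < 2 ^ (ℓ - 1)),
      ω ⟨t, ht⟩ ⟨j / 2 ^ (t + 1), hb⟩ = ω' ⟨t, ht⟩ ⟨j / 2 ^ (t + 1), hb⟩) :
    WinsFirstMatches ℓ ω j r ↔ WinsFirstMatches ℓ ω' j r :=
  forall₂_congr fun t htr => forall₂_congr fun ht hb => by rw [h t htr ht hb]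

theorem winsFirstMatches_zero (ω : TournOmega ℓ) (j : ℕ) : WinsFirstMatches ℓ ω j 0 :=
  fun t ht => absurd ht t.not_lt_zero

theorem WinsFirstMatches.mono {ω : TournOmega ℓ} {j r r' : ℕ} (hw : WinsFirstMatches ℓ ω j r)
    (hr : r' ≤ r) : WinsFirstMatches ℓ ω j r' :=
  fun t ht => hw t (ht.trans_le hr)

theorem winsFirstMatches_succ_iff {ω : TournOmega ℓ} {j r : ℕ} (hr : r < ℓ)
    (hb : j / 2 ^ (r + 1) < 2 ^ (ℓ - 1)) :
    WinsFirstMatches ℓ ω j (r + 1) ↔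
      WinsFirstMatches ℓ ω j r ∧ ω ⟨r, hr⟩ ⟨j / 2 ^ (r + 1), hb⟩ = decide (j / 2 ^ r % 2 = 0) :=
  ⟨fun hw => ⟨hw.mono r.le_succ, hw r r.lt_succ_self hr hb⟩, fun ⟨hw, hbit⟩ t ht =>
    (Nat.lt_succ_iff_lt_or_eq.1 ht).elim (hw t) fun htr _ _ => by subst htr; exact hbit⟩

theorem tournWinner_succ (ω : TournOmega ℓ) {r b : ℕ} (hr : r < ℓ) (hb : b < 2 ^ (ℓ - 1)) :
    tournWinner ℓ ω (r + 1) b = tournWinner ℓ ω r (2 * b + if ω ⟨r, hr⟩ ⟨b, hb⟩ then 0 else 1) := by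
  rw [tournWinner, dif_pos ⟨hr, hb⟩]
  split <;> rfl

theorem tournWinner_div_two_pow (ω : TournOmega ℓ) {r b : ℕ} (hr : r ≤ ℓ)
    (hb : b < 2 ^ (ℓ - r)) : tournWinner ℓ ω r b / 2 ^ r = b := by
  induction r generalizing b with
  | zero => simp [tournWinner]
  | succ r ih =>
    have hb' : b < 2 ^ (ℓ - 1) := hb.trans_le (Nat.pow_le_pow_right two_pos (by omega))
    have hpow := pow_sub_eq_mul_pow_sub_succ 2 (show r < ℓ by omega)
    rw [tournWinner_succ ω (by omega) hb', pow_succ, ← Nat.div_div_eq_div_mul,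
      ih (by omega) (by split <;> omega)]
    split <;> omega

theorem tournWinner_eq_iff_of_lt (ω : TournOmega ℓ) {r x j : ℕ} (hr : r ≤ ℓ)
    (hx : x < 2 ^ (ℓ - r)) :
    tournWinner ℓ ω r x = j ↔ x = j / 2 ^ r ∧ tournWinner ℓ ω r (j / 2 ^ r) = j := by
  constructor
  · intro hw
    have hdiv := tournWinner_div_two_pow ω hr hx
    rw [hw] at hdiv
    exact ⟨hdiv.symm, hdiv ▸ hw⟩
  · rintro ⟨rfl, hw⟩
    exact hw

theorem tournWinner_eq_iff (ω : TournOmega ℓ) {j r : ℕ} (hj : j < 2 ^ ℓ) (hr : r ≤ ℓ) :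
    tournWinner ℓ ω r (j / 2 ^ r) = j ↔ WinsFirstMatches ℓ ω j r := by
  induction r with
  | zero => simpa [tournWinner] using winsFirstMatches_zero ω j
  | succ r ih =>
    have hrℓ : r < ℓ := by omega
    have hq : j / 2 ^ (r + 1) < 2 ^ (ℓ - (r + 1)) := Nat.div_lt_of_lt_mul <| by
      rw [← pow_add]
      exact hj.trans_le (Nat.pow_le_pow_right two_pos (by omega))
    have hb : j / 2 ^ (r + 1) < 2 ^ (ℓ - 1) :=
      hq.trans_le (Nat.pow_le_pow_right two_pos (by omega))
    have hdiv : j / 2 ^ r = 2 * (j / 2 ^ (r + 1)) + j / 2 ^ r % 2 := by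
      rw [pow_succ, ← Nat.div_div_eq_div_mul]
      exact (Nat.div_add_mod _ 2).symm
    have hpow := pow_sub_eq_mul_pow_sub_succ 2 hrℓ
    have hbit : (2 * (j / 2 ^ (r + 1)) + if ω ⟨r, hrℓ⟩ ⟨_, hb⟩ then 0 else 1) = j / 2 ^ r ↔
        ω ⟨r, hrℓ⟩ ⟨_, hb⟩ = decide (j / 2 ^ r % 2 = 0) := by
      generalize ω ⟨r, hrℓ⟩ ⟨j / 2 ^ (r + 1), hb⟩ = c
      cases c <;> simp <;> omega
    rw [tournWinner_succ ω hrℓ hb, winsFirstMatches_succ_iff hrℓ hb, ← ih (by omega),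
      tournWinner_eq_iff_of_lt ω hrℓ.le (by split <;> omega), hbit, and_comm]

theorem tournScore_eq_card (ω : TournOmega ℓ) (i : Fin (2 ^ ℓ)) :
    tournScore ℓ ω i = (#{r ∈ Icc 1 ℓ | WinsFirstMatches ℓ ω i r} : ℝ) := by
  unfold tournScore
  congr 2
  exact filter_congr fun r hr => tournWinner_eq_iff ω i.2 (mem_Icc.1 hr).2

theorem natCast_le_tournScore_iff (ω : TournOmega ℓ) (i : Fin (2 ^ ℓ)) {m : ℕ} (hm : m ≤ ℓ) :
    (m : ℝ) ≤ tournScore ℓ ω i ↔ WinsFirstMatches ℓ ω i m := by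
  rw [tournScore_eq_card, Nat.cast_le]
  exact le_card_filter_Icc_iff (fun _ _ hab hw => hw.mono hab) (winsFirstMatches_zero ω i) hm

theorem le_tournScore_iff_winsFirstMatches_ceil (ω : TournOmega ℓ) (i : Fin (2 ^ ℓ)) {x : ℝ}
    (hx : ⌈x⌉₊ ≤ ℓ) : x ≤ tournScore ℓ ω i ↔ WinsFirstMatches ℓ ω i ⌈x⌉₊ := by
  rw [← natCast_le_tournScore_iff ω i hx, tournScore_eq_card, Nat.cast_le, Nat.ceil_le]

theorem tournScore_eq_natCast_iff (ω : TournOmega ℓ) (i : Fin (2 ^ ℓ)) {m : ℕ}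
    (hm : m + 1 ≤ ℓ) :
    tournScore ℓ ω i = m ↔ WinsFirstMatches ℓ ω i m ∧ ¬ WinsFirstMatches ℓ ω i (m + 1) := by
  rw [← natCast_le_tournScore_iff ω i (by omega), ← natCast_le_tournScore_iff ω i hm,
    tournScore_eq_card]
  push_cast
  rw [Nat.cast_inj, Nat.cast_le, ← Nat.cast_succ, Nat.cast_le]
  omega

theorem not_winsFirstMatches_of_winsFirstMatches_zero {ω : TournOmega ℓ} {h j : ℕ}
    (hh : h ≤ ℓ) (hj : j < 2 ^ h) (hj0 : j ≠ 0) (h0 : WinsFirstMatches ℓ ω 0 h) :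
    ¬ WinsFirstMatches ℓ ω j h := by
  intro hw
  rw [← tournWinner_eq_iff ω (hj.trans_le (Nat.pow_le_pow_right two_pos hh)) hh,
    Nat.div_eq_of_lt hj] at hw
  rw [← tournWinner_eq_iff ω (Nat.two_pow_pos ℓ) hh, Nat.zero_div] at h0
  exact hj0 (hw.symm.trans h0)

/-- The coins of the first `h` rounds inside the block of players `0, …, 2^h - 1` (round
`t+1` of the block has `2^(h-1-t)` matches) are taken from `a`, the others from `b`. -/
def blockSplice (h : ℕ) (a b : TournOmega ℓ) : TournOmega ℓ :=
  fun t c => if t.1 < h ∧ c.1 < 2 ^ (h - 1 - t.1) then a t c else b t c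

theorem blockSplice_blockSplice (h : ℕ) (a b : TournOmega ℓ) :
    blockSplice h (blockSplice h a b) (blockSplice h b a) = a := by
  funext t c
  simp only [blockSplice]
  split_ifs <;> rfl

theorem winsFirstMatches_blockSplice_of_lt {h j r : ℕ} (a b : TournOmega ℓ) (hj : j < 2 ^ h)
    (hr : r ≤ h) : WinsFirstMatches ℓ (blockSplice h a b) j r ↔ WinsFirstMatches ℓ a j r :=
  winsFirstMatches_congr fun t htr _ _ => by
    have hin : t < h ∧ j / 2 ^ (t + 1) < 2 ^ (h - 1 - t) := ⟨by omega, Nat.div_lt_of_lt_mul <| by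
      rw [← pow_add]
      exact hj.trans_le (Nat.pow_le_pow_right two_pos (by omega))⟩
    exact if_pos hin

theorem winsFirstMatches_blockSplice_of_le {h j r : ℕ} (a b : TournOmega ℓ) (hj : 2 ^ h ≤ j) :
    WinsFirstMatches ℓ (blockSplice h a b) j r ↔ WinsFirstMatches ℓ b j r :=
  winsFirstMatches_congr fun t _ _ _ => by
    have hout : ¬ (t < h ∧ j / 2 ^ (t + 1) < 2 ^ (h - 1 - t)) := fun ⟨hth, hlt⟩ =>
      hlt.not_ge <| by
        rw [Nat.le_div_iff_mul_le (by positivity), ← pow_add]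
        exact (Nat.pow_le_pow_right two_pos (by omega)).trans hj
    exact if_neg hout

theorem tournScore_blockSplice_of_le {h : ℕ} (a b : TournOmega ℓ) {i : Fin (2 ^ ℓ)}
    (hi : 2 ^ h ≤ i.1) : tournScore ℓ (blockSplice h a b) i = tournScore ℓ b i := by
  rw [tournScore_eq_card, tournScore_eq_card]
  congr 2
  exact filter_congr fun r _ => winsFirstMatches_blockSplice_of_le a b hi

/-- Player `0` loses its `h`-th match; all other coins are kept. -/
def upsetFirstPlayer (h : ℕ) (ω : TournOmega ℓ) : TournOmega ℓ :=
  fun t c => if t.1 = h - 1 ∧ c.1 = 0 then false else ω t c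

theorem winsFirstMatches_upsetFirstPlayer {h j r : ℕ} (ω : TournOmega ℓ) (hr : r ≤ h - 1) :
    WinsFirstMatches ℓ (upsetFirstPlayer h ω) j r ↔ WinsFirstMatches ℓ ω j r :=
  winsFirstMatches_congr fun t htr _ _ => by
    have hout : ¬ (t = h - 1 ∧ j / 2 ^ (t + 1) = 0) := fun ⟨ht, _⟩ => by omega
    exact if_neg hout

theorem not_winsFirstMatches_upsetFirstPlayer {h : ℕ} (ω : TournOmega ℓ) (hh1 : 1 ≤ h)
    (hh : h ≤ ℓ) : ¬ WinsFirstMatches ℓ (upsetFirstPlayer h ω) 0 h := fun hw => by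
  simpa [upsetFirstPlayer] using hw (h - 1) (by omega) (by omega) (by simp)

variable (h : ℕ) (I : Finset (Fin (2 ^ ℓ))) (s : Fin (2 ^ ℓ) → ℝ)

def BlockConstraint (ω : TournOmega ℓ) : Prop :=
  ∀ i ∈ I, i.1 ≠ 0 → i.1 < 2 ^ h → WinsFirstMatches ℓ ω i ⌈s i⌉₊

def OutsideConstraint (ω : TournOmega ℓ) : Prop :=
  ∀ i ∈ I, 2 ^ h ≤ i.1 → s i ≤ tournScore ℓ ω i

def BlockThresholdsLt : Prop :=
  ∀ i ∈ I, i.1 ≠ 0 → i.1 < 2 ^ h → ⌈s i⌉₊ < h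

variable {h I s}

theorem ceil_lt_of_winsFirstMatches_zero {ω : TournOmega ℓ} (hh : h ≤ ℓ)
    (h0 : WinsFirstMatches ℓ ω 0 h) {i : Fin (2 ^ ℓ)} (hi0 : i.1 ≠ 0) (hih : i.1 < 2 ^ h)
    {x : ℝ} (hx : x ≤ tournScore ℓ ω i) : ⌈x⌉₊ < h := by
  rw [← not_le]
  intro hc
  refine not_winsFirstMatches_of_winsFirstMatches_zero hh hih hi0 h0 ?_
  rw [tournScore_eq_card, ← Nat.ceil_le] at hx
  rw [← natCast_le_tournScore_iff ω i hh, tournScore_eq_card, Nat.cast_le]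
  exact hc.trans hx

theorem constraints_iff (hs : BlockThresholdsLt h I s) (hh : h ≤ ℓ)
    (ω : TournOmega ℓ) :
    (∀ i ∈ I, i.1 ≠ 0 → s i ≤ tournScore ℓ ω i) ↔
      BlockConstraint h I s ω ∧ OutsideConstraint h I s ω := by
  have hblock : ∀ i ∈ I, i.1 ≠ 0 → i.1 < 2 ^ h →
      (s i ≤ tournScore ℓ ω i ↔ WinsFirstMatches ℓ ω i ⌈s i⌉₊) := fun i hi hi0 hih =>
    le_tournScore_iff_winsFirstMatches_ceil ω i ((hs i hi hi0 hih).le.trans hh)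
  constructor
  · intro hc
    exact ⟨fun i hi hi0 hih => (hblock i hi hi0 hih).1 (hc i hi hi0),
      fun i hi hih => hc i hi ((Nat.two_pow_pos h).trans_le hih).ne'⟩
  · rintro ⟨hb, ho⟩ i hi hi0
    rcases lt_or_ge i.1 (2 ^ h) with hih | hih
    · exact (hblock i hi hi0 hih).2 (hb i hi hi0 hih)
    · exact ho i hi hih

theorem firstScore_eq_and_constraints_iff (hs : BlockThresholdsLt h I s)
    (hh1 : 1 ≤ h) (hh : h ≤ ℓ) (ω : TournOmega ℓ) :
    (tournScore ℓ ω ⟨0, Nat.two_pow_pos ℓ⟩ = ((h - 1 : ℕ) : ℝ) ∧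
      ∀ i ∈ I, i.1 ≠ 0 → s i ≤ tournScore ℓ ω i) ↔
      ((WinsFirstMatches ℓ ω 0 (h - 1) ∧ ¬ WinsFirstMatches ℓ ω 0 h) ∧ BlockConstraint h I s ω)
        ∧ OutsideConstraint h I s ω := by
  rw [tournScore_eq_natCast_iff ω _ (by omega), Nat.sub_add_cancel hh1, constraints_iff hs hh]
  exact and_assoc.symm

theorem le_firstScore_and_constraints_iff (hs : BlockThresholdsLt h I s)
    (hh : h ≤ ℓ) (ω : TournOmega ℓ) :
    ((h : ℝ) ≤ tournScore ℓ ω ⟨0, Nat.two_pow_pos ℓ⟩ ∧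
      ∀ i ∈ I, i.1 ≠ 0 → s i ≤ tournScore ℓ ω i) ↔
      (WinsFirstMatches ℓ ω 0 h ∧ BlockConstraint h I s ω) ∧ OutsideConstraint h I s ω := by
  rw [natCast_le_tournScore_iff ω _ hh, constraints_iff hs hh]
  exact and_assoc.symm

theorem blockConstraint_blockSplice (hs : BlockThresholdsLt h I s)
    (a b : TournOmega ℓ) :
    BlockConstraint h I s (blockSplice h a b) ↔ BlockConstraint h I s a :=
  forall₂_congr fun i hi => forall₂_congr fun hi0 hih =>
    winsFirstMatches_blockSplice_of_lt a b hih (hs i hi hi0 hih).le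

theorem blockConstraint_upsetFirstPlayer (hs : BlockThresholdsLt h I s)
    (ω : TournOmega ℓ) :
    BlockConstraint h I s (upsetFirstPlayer h ω) ↔ BlockConstraint h I s ω :=
  forall₂_congr fun i hi => forall₂_congr fun hi0 hih =>
    winsFirstMatches_upsetFirstPlayer ω (by have := hs i hi hi0 hih; omega)

theorem outsideConstraint_blockSplice (a b : TournOmega ℓ) :
    OutsideConstraint h I s (blockSplice h a b) ↔ OutsideConstraint h I s b :=
  forall₂_congr fun i _ => forall_congr' fun hih => by rw [tournScore_blockSplice_of_le a b hih]

theorem cExp_and_outsideConstraint {P : TournOmega ℓ → Prop}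
    (hP : ∀ a b, P (blockSplice h a b) ↔ P a) (hPne : ∃ ω, P ω) {J : Finset (Fin (2 ^ ℓ))}
    (hJ : ∀ j ∈ J, 2 ^ h ≤ j.1) (f : ({j // j ∈ J} → ℝ) → ℝ) :
    CExp (tournUnif ℓ) (fun ω => P ω ∧ OutsideConstraint h I s ω)
        (fun ω => f fun j => tournScore ℓ ω j.1)
      = CExp (tournUnif ℓ) (OutsideConstraint h I s) (fun ω => f fun j => tournScore ℓ ω j.1) :=
  cExp_const_and_eq_of_splice (blockSplice_blockSplice h) _ hP outsideConstraint_blockSplice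
    (fun a b => congrArg f (funext fun j => tournScore_blockSplice_of_le a b (hJ j.1 j.2))) hPne

end Knockout

open Knockout in
/-- in the knockout tournament with `n = 2^ℓ` players (`ℓ ≥ 2`) of equal
strength and deterministic draw, fix `h ∈ {1,…,ℓ}`, a nonempty proper subset `I` of
the players containing player 1 (index `0`), and a vector `s` over `I∖{1}` such that
`P(S_1 ≥ h, S_i ≥ s_i ∀ i ∈ I∖{1}) > 0`.  With
`J = ({1,…,n}∖{1,…,2^h}) ∩ Iᶜ`, the conditional distribution of `S_J` given
`{S_1 = h-1, S_i ≥ s_i ∀ i ∈ I∖{1}}` equals that given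
`{S_1 ≥ h, S_i ≥ s_i ∀ i ∈ I∖{1}}` (equality of all conditional expectations). -/
theorem knockout_outside_block_conditional_law_eq (ℓ : ℕ)
    (h : ℕ) (hh1 : 1 ≤ h) (hhℓ : h ≤ ℓ)
    (I : Finset (Fin (2 ^ ℓ)))
    (s : Fin (2 ^ ℓ) → ℝ)
    (hpos : 0 < Pr (tournUnif ℓ) fun ω =>
      (h : ℝ) ≤ tournScore ℓ ω ⟨0, by positivity⟩ ∧
      ∀ i ∈ I, i.1 ≠ 0 → s i ≤ tournScore ℓ ω i) :
    ∀ f : ({j : Fin (2 ^ ℓ) //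
        j ∈ (Finset.univ.filter fun j : Fin (2 ^ ℓ) => 2 ^ h ≤ j.1) \ I} → ℝ) → ℝ,
      CExp (tournUnif ℓ)
          (fun ω => tournScore ℓ ω ⟨0, by positivity⟩ = ((h - 1 : ℕ) : ℝ) ∧
            ∀ i ∈ I, i.1 ≠ 0 → s i ≤ tournScore ℓ ω i)
          (fun ω => f fun j => tournScore ℓ ω j.1)
        = CExp (tournUnif ℓ)
          (fun ω => (h : ℝ) ≤ tournScore ℓ ω ⟨0, by positivity⟩ ∧
            ∀ i ∈ I, i.1 ≠ 0 → s i ≤ tournScore ℓ ω i)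
          (fun ω => f fun j => tournScore ℓ ω j.1) := by
  intro f
  obtain ⟨ω₁, hge, hcon⟩ := exists_of_pr_pos hpos
  have h0 : WinsFirstMatches ℓ ω₁ 0 h := (natCast_le_tournScore_iff ω₁ _ hhℓ).1 hge
  have hs : BlockThresholdsLt h I s := fun i hi hi0 hih =>
    ceil_lt_of_winsFirstMatches_zero hhℓ h0 hi0 hih (hcon i hi hi0)
  have hblock := ((constraints_iff hs hhℓ ω₁).1 hcon).1
  have hJ : ∀ j ∈ (univ.filter fun j : Fin (2 ^ ℓ) => 2 ^ h ≤ j.1) \ I, 2 ^ h ≤ j.1 :=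
    fun j hj => (mem_filter.1 (mem_sdiff.1 hj).1).2
  have hlose : (WinsFirstMatches ℓ (upsetFirstPlayer h ω₁) 0 (h - 1) ∧
      ¬ WinsFirstMatches ℓ (upsetFirstPlayer h ω₁) 0 h) ∧
      BlockConstraint h I s (upsetFirstPlayer h ω₁) :=
    ⟨⟨(winsFirstMatches_upsetFirstPlayer ω₁ le_rfl).2 (h0.mono (by omega)),
      not_winsFirstMatches_upsetFirstPlayer ω₁ hh1 hhℓ⟩,
      (blockConstraint_upsetFirstPlayer hs ω₁).2 hblock⟩
  rw [cExp_congr_event (firstScore_eq_and_constraints_iff hs hh1 hhℓ),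
    cExp_congr_event (le_firstScore_and_constraints_iff hs hhℓ),
    cExp_and_outsideConstraint (fun a b => by
      rw [winsFirstMatches_blockSplice_of_lt a b (Nat.two_pow_pos h) (by omega),
        winsFirstMatches_blockSplice_of_lt a b (Nat.two_pow_pos h) le_rfl,
        blockConstraint_blockSplice hs]) ⟨_, hlose⟩ hJ f,
    cExp_and_outsideConstraint (fun a b => by
      rw [winsFirstMatches_blockSplice_of_lt a b (Nat.two_pow_pos h) le_rfl,
        blockConstraint_blockSplice hs]) ⟨ω₁, h0, hblock⟩ hJ f]
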